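/- arXiv:1509.05137 — 8 statements merged into one kernel-verified Lean document; each statement's English description precedes it below -/
import Mathlib

section
/- Let π_0,…,π_Q, g_{i,m} (0 ≤ i ≤ Q, 1 ≤ m ≤ M), and f_{i,m} (1 ≤ i ≤ Q, 1 ≤ m ≤ M) be real numbers, and suppose the local balance equations α·π_i·Σ_{m=1}^{M} η_m(1−g_{i,m}) = (1−α)·π_{i+1}·Σ_{m=1}^{M} η_m f_{i+1,m} hold for all 0 ≤ i ≤ Q−1. Define y_{i,m} := π_i g_{i,m} + ξ·π_{i+1} f_{i+1,m} for 0 ≤ i ≤ Q−1 and y_{Q,m} := π_Q g_{Q,m}. Then π_i = Σ_{m=1}^{M} η_m y_{i,m} for all 0 ≤ i ≤ Q−1; moreover, if additionally Σ_{m=1}^{M} η_m g_{Q,m} = 1, then also π_Q = Σ_{m=1}^{M} η_m y_{Q,m}. -/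
/-! Weighting `y_{i,m}` by `η_m` gives `π_i Σ η g_i + ξ π_{i+1} Σ η f_{i+1}`; dividing the
balance equation by `α` turns the second term into `π_i (1 - Σ η g_i)`, since `Σ η = 1`. -/

section WeightedSums

variable {ι : Type*} (s : Finset ι)

theorem sum_mul_one_sub_of_sum_eq_one {η : ι → ℝ} (hη : ∑ m ∈ s, η m = 1) (g : ι → ℝ) :
    ∑ m ∈ s, η m * (1 - g m) = 1 - ∑ m ∈ s, η m * g m := by
  simp only [mul_sub, mul_one, Finset.sum_sub_distrib, hη]

theorem sum_mul_linear_combination (η : ι → ℝ) (a b : ℝ) (g f : ι → ℝ) :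
    ∑ m ∈ s, η m * (a * g m + b * f m) =
      a * ∑ m ∈ s, η m * g m + b * ∑ m ∈ s, η m * f m := by
  simp only [Finset.mul_sum, ← Finset.sum_add_distrib]
  exact Finset.sum_congr rfl fun _ _ => by ring

end WeightedSums

theorem xi_mul_eq_of_balance {α ξ p p' G F : ℝ} (hα : α ≠ 0) (hξ : ξ = (1 - α) / α)
    (hbal : α * p * (1 - G) = (1 - α) * p' * F) :
    ξ * p' * F = p * (1 - G) := by
  rw [hξ]
  field_simp
  linarith

theorem pi_eq_sum_eta_y_general
    (Q M : ℕ)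
    (α : ℝ) (hα0 : 0 < α)
    (ξ : ℝ) (hξ : ξ = (1 - α) / α)
    (η : ℕ → ℝ)
    (hηsum : ∑ m ∈ Finset.Icc 1 M, η m = 1)
    (pi : ℕ → ℝ) (g f y : ℕ → ℕ → ℝ)
    (hbal : ∀ i, i < Q →
      α * pi i * (∑ m ∈ Finset.Icc 1 M, η m * (1 - g i m)) =
        (1 - α) * pi (i + 1) * (∑ m ∈ Finset.Icc 1 M, η m * f (i + 1) m))
    (hy : ∀ i, i < Q → ∀ m ∈ Finset.Icc 1 M,
      y i m = pi i * g i m + ξ * pi (i + 1) * f (i + 1) m)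
    (hyQ : ∀ m ∈ Finset.Icc 1 M, y Q m = pi Q * g Q m) :
    (∀ i, i < Q → pi i = ∑ m ∈ Finset.Icc 1 M, η m * y i m) ∧
    ((∑ m ∈ Finset.Icc 1 M, η m * g Q m = 1) →
      pi Q = ∑ m ∈ Finset.Icc 1 M, η m * y Q m) := by
  refine ⟨fun i hi => ?_, fun hgQ => ?_⟩
  · have hb := hbal i hi
    rw [sum_mul_one_sub_of_sum_eq_one _ hηsum] at hb
    rw [Finset.sum_congr rfl fun m hm => by rw [hy i hi m hm], sum_mul_linear_combination,
      xi_mul_eq_of_balance hα0.ne' hξ hb]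
    ring
  · rw [Finset.sum_congr rfl fun m hm => by rw [hyQ m hm, mul_left_comm], ← Finset.mul_sum,
      hgQ, mul_one]

theorem pi_eq_sum_eta_y
    (Q M : ℕ) (hQ : 1 ≤ Q) (hM : 1 ≤ M)
    (α : ℝ) (hα0 : 0 < α) (hα1 : α < 1)
    (ξ : ℝ) (hξ : ξ = (1 - α) / α)
    (η : ℕ → ℝ) (hη : ∀ m ∈ Finset.Icc 1 M, 0 < η m)
    (hηsum : ∑ m ∈ Finset.Icc 1 M, η m = 1)
    (pi : ℕ → ℝ) (g f y : ℕ → ℕ → ℝ)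
    (hbal : ∀ i, i < Q →
      α * pi i * (∑ m ∈ Finset.Icc 1 M, η m * (1 - g i m)) =
        (1 - α) * pi (i + 1) * (∑ m ∈ Finset.Icc 1 M, η m * f (i + 1) m))
    (hy : ∀ i, i < Q → ∀ m ∈ Finset.Icc 1 M,
      y i m = pi i * g i m + ξ * pi (i + 1) * f (i + 1) m)
    (hyQ : ∀ m ∈ Finset.Icc 1 M, y Q m = pi Q * g Q m) :
    (∀ i, i < Q → pi i = ∑ m ∈ Finset.Icc 1 M, η m * y i m) ∧
    ((∑ m ∈ Finset.Icc 1 M, η m * g Q m = 1) →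
      pi Q = ∑ m ∈ Finset.Icc 1 M, η m * y Q m) :=
  pi_eq_sum_eta_y_general Q M α hα0 ξ hξ η hηsum pi g f y hbal hy hyQ
end

section
/- (Lemma 1, delay part.) Let π_0,…,π_Q, g_{i,m}, f_{i,m} be real numbers satisfying the local balance equations α·π_i·Σ_{m=1}^{M} η_m(1−g_{i,m}) = (1−α)·π_{i+1}·Σ_{m=1}^{M} η_m f_{i+1,m} for 0 ≤ i ≤ Q−1 and Σ_{m=1}^{M} η_m g_{Q,m} = 1, and define y_{i,m} := π_i g_{i,m} + ξ·π_{i+1} f_{i+1,m} for 0 ≤ i ≤ Q−1 and y_{Q,m} := π_Q g_{Q,m}. Then the average queueing delay satisfies D̄ := (1/α)·Σ_{i=0}^{Q} i·π_i = (1/α)·Σ_{m=1}^{M} Σ_{i=0}^{Q} i·η_m·y_{i,m}; i.e., D̄ is a linear function of the variables y_{i,m}. -/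
/-!
Averaging the definition of `y_{i,m}` over the channel states, the local balance equation turns
the `ξ`-term into `π_i (1 - Σ_m η_m g_{i,m})`, so `Σ_m η_m y_{i,m} = π_i` for every `i ≤ Q`
(at `i = Q` this is the normalisation `Σ_m η_m g_{Q,m} = 1`). The delay formula then follows by
exchanging the two sums.
-/

open Finset

section WeightedAverage

variable {ι : Type*} {s : Finset ι} {η g f y : ι → ℝ}

theorem sum_mul_eq_of_balance {α p p' : ℝ} (hα : α ≠ 0) (hη : ∑ m ∈ s, η m = 1)
    (hbal : α * p * ∑ m ∈ s, η m * (1 - g m) = (1 - α) * p' * ∑ m ∈ s, η m * f m)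
    (hy : ∀ m ∈ s, y m = p * g m + (1 - α) / α * p' * f m) :
    ∑ m ∈ s, η m * y m = p := by
  have hcompl : ∑ m ∈ s, η m * (1 - g m) = 1 - ∑ m ∈ s, η m * g m := by
    simp only [mul_sub, mul_one, sum_sub_distrib, hη]
  have hsplit : ∑ m ∈ s, η m * y m =
      p * ∑ m ∈ s, η m * g m + (1 - α) / α * (p' * ∑ m ∈ s, η m * f m) := by
    rw [mul_sum, mul_sum, mul_sum, ← sum_add_distrib]
    exact sum_congr rfl fun m hm => by rw [hy m hm]; ring
  rw [hcompl] at hbal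
  rw [hsplit]
  field_simp
  linarith

theorem sum_mul_eq_of_sum_mul_eq_one {p : ℝ} (hg : ∑ m ∈ s, η m * g m = 1)
    (hy : ∀ m ∈ s, y m = p * g m) :
    ∑ m ∈ s, η m * y m = p := by
  calc ∑ m ∈ s, η m * y m = p * ∑ m ∈ s, η m * g m := by
        rw [mul_sum]
        exact sum_congr rfl fun m hm => by rw [hy m hm]; ring
    _ = p := by rw [hg, mul_one]

end WeightedAverage

theorem sum_mul_eq_sum_sum_of_sum_mul_eq {κ ι : Type*} {t : Finset κ} {s : Finset ι}
    {c π : κ → ℝ} {η : ι → ℝ} {y : κ → ι → ℝ} (h : ∀ i ∈ t, ∑ m ∈ s, η m * y i m = π i) :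
    ∑ i ∈ t, c i * π i = ∑ m ∈ s, ∑ i ∈ t, c i * η m * y i m := by
  rw [sum_comm]
  refine sum_congr rfl fun i hi => ?_
  rw [← h i hi, mul_sum]
  simp only [mul_assoc]

theorem avg_delay_linear_in_y_general
    (Q M : ℕ)
    (α : ℝ) (hα0 : 0 < α)
    (ξ : ℝ) (hξ : ξ = (1 - α) / α)
    (η : ℕ → ℝ)
    (hηsum : ∑ m ∈ Finset.Icc 1 M, η m = 1)
    (pi : ℕ → ℝ) (g f y : ℕ → ℕ → ℝ)
    (hbal : ∀ i, i < Q →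
      α * pi i * (∑ m ∈ Finset.Icc 1 M, η m * (1 - g i m)) =
        (1 - α) * pi (i + 1) * (∑ m ∈ Finset.Icc 1 M, η m * f (i + 1) m))
    (hgQ : ∑ m ∈ Finset.Icc 1 M, η m * g Q m = 1)
    (hy : ∀ i, i < Q → ∀ m ∈ Finset.Icc 1 M,
      y i m = pi i * g i m + ξ * pi (i + 1) * f (i + 1) m)
    (hyQ : ∀ m ∈ Finset.Icc 1 M, y Q m = pi Q * g Q m) :
    (1 / α) * ∑ i ∈ Finset.range (Q + 1), (i : ℝ) * pi i =
      (1 / α) * ∑ m ∈ Finset.Icc 1 M, ∑ i ∈ Finset.range (Q + 1),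
        (i : ℝ) * η m * y i m := by
  subst hξ
  congr 1
  refine sum_mul_eq_sum_sum_of_sum_mul_eq fun i hi => ?_
  rcases (Nat.lt_succ_iff.mp (mem_range.mp hi)).lt_or_eq with hlt | rfl
  · exact sum_mul_eq_of_balance hα0.ne' hηsum (hbal i hlt) (hy i hlt)
  · exact sum_mul_eq_of_sum_mul_eq_one hgQ hyQ

theorem avg_delay_linear_in_y
    (Q M : ℕ) (hQ : 1 ≤ Q) (hM : 1 ≤ M)
    (α : ℝ) (hα0 : 0 < α) (hα1 : α < 1)
    (ξ : ℝ) (hξ : ξ = (1 - α) / α)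
    (η : ℕ → ℝ) (hη : ∀ m ∈ Finset.Icc 1 M, 0 < η m)
    (hηsum : ∑ m ∈ Finset.Icc 1 M, η m = 1)
    (pi : ℕ → ℝ) (g f y : ℕ → ℕ → ℝ)
    (hbal : ∀ i, i < Q →
      α * pi i * (∑ m ∈ Finset.Icc 1 M, η m * (1 - g i m)) =
        (1 - α) * pi (i + 1) * (∑ m ∈ Finset.Icc 1 M, η m * f (i + 1) m))
    (hgQ : ∑ m ∈ Finset.Icc 1 M, η m * g Q m = 1)
    (hy : ∀ i, i < Q → ∀ m ∈ Finset.Icc 1 M,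
      y i m = pi i * g i m + ξ * pi (i + 1) * f (i + 1) m)
    (hyQ : ∀ m ∈ Finset.Icc 1 M, y Q m = pi Q * g Q m) :
    (1 / α) * ∑ i ∈ Finset.range (Q + 1), (i : ℝ) * pi i =
      (1 / α) * ∑ m ∈ Finset.Icc 1 M, ∑ i ∈ Finset.range (Q + 1),
        (i : ℝ) * η m * y i m :=
  avg_delay_linear_in_y_general Q M α hα0 ξ hξ η hηsum pi g f y hbal hgQ hy hyQ
end

section
/- Let π_0,…,π_Q ≥ 0 and let g_{i,m}, f_{i,m} ∈ [0,1] satisfy the local balance equations α·π_i·Σ_{m=1}^{M} η_m(1−g_{i,m}) = (1−α)·π_{i+1}·Σ_{m=1}^{M} η_m f_{i+1,m} for 0 ≤ i ≤ Q−1 and Σ_{m=1}^{M} η_m g_{Q,m} = 1. Define y_{i,m} := π_i g_{i,m} + ξ·π_{i+1} f_{i+1,m} for 0 ≤ i ≤ Q−1, y_{Q,m} := π_Q g_{Q,m}, and y_{Q+1,m} := 0. Then for all 0 ≤ i ≤ Q and 1 ≤ m ≤ M, the LP inequality constraints hold: 0 ≤ y_{i,m} ≤ Σ_{n=1}^{M}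 η_n y_{i,n} + ξ·Σ_{n=1}^{M} η_n y_{i+1,n}. -/
open Finset

lemma sum_mul_one_sub {ι : Type*} (s : Finset ι) (η g : ι → ℝ)
    (hη : ∑ n ∈ s, η n = 1) :
    ∑ n ∈ s, η n * (1 - g n) = 1 - ∑ n ∈ s, η n * g n := by
  simp only [mul_one_sub, sum_sub_distrib, hη]

/-- By local balance, the term `(1 - α) / α * p' * Σ η f` refills exactly the mass `p (1 - Σ η g)`
that `g` leaves out. -/
lemma sum_mul_add_eq_of_balance {ι : Type*} (s : Finset ι) (η g f : ι → ℝ) {α p p' : ℝ}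
    (hα : α ≠ 0) (hη : ∑ n ∈ s, η n = 1)
    (hbal : α * p * ∑ n ∈ s, η n * (1 - g n) = (1 - α) * p' * ∑ n ∈ s, η n * f n) :
    ∑ n ∈ s, η n * (p * g n + (1 - α) / α * p' * f n) = p := by
  have hsplit : ∑ n ∈ s, η n * (p * g n + (1 - α) / α * p' * f n) =
      p * ∑ n ∈ s, η n * g n + (1 - α) / α * p' * ∑ n ∈ s, η n * f n := by
    simp only [mul_sum, ← sum_add_distrib]
    exact sum_congr rfl fun n _ => by ring
  rw [sum_mul_one_sub s η g hη] at hbal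
  rw [hsplit]
  field_simp
  linarith

lemma mul_add_mul_mem_Icc {p p' c a b : ℝ} (hp : 0 ≤ p) (hp' : 0 ≤ p') (hc : 0 ≤ c)
    (ha : a ∈ Set.Icc (0 : ℝ) 1) (hb : b ∈ Set.Icc (0 : ℝ) 1) :
    p * a + c * p' * b ∈ Set.Icc 0 (p + c * p') := by
  have hcp' : 0 ≤ c * p' := mul_nonneg hc hp'
  constructor
  · exact add_nonneg (mul_nonneg hp ha.1) (mul_nonneg hcp' hb.1)
  · exact add_le_add (mul_le_of_le_one_right hp ha.2) (mul_le_of_le_one_right hcp' hb.2)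

theorem y_satisfies_LP_constraints_general
    (Q M : ℕ)
    (α : ℝ) (hα0 : 0 < α) (hα1 : α < 1)
    (ξ : ℝ) (hξ : ξ = (1 - α) / α)
    (η : ℕ → ℝ)
    (hηsum : ∑ m ∈ Finset.Icc 1 M, η m = 1)
    (pi : ℕ → ℝ) (g f y : ℕ → ℕ → ℝ)
    (hpi_nonneg : ∀ i, i ≤ Q → 0 ≤ pi i)
    (hg : ∀ i, i ≤ Q → ∀ m ∈ Finset.Icc 1 M, g i m ∈ Set.Icc (0 : ℝ) 1)
    (hf : ∀ i, 1 ≤ i → i ≤ Q → ∀ m ∈ Finset.Icc 1 M, f i m ∈ Set.Icc (0 : ℝ) 1)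
    (hbal : ∀ i, i < Q →
      α * pi i * (∑ m ∈ Finset.Icc 1 M, η m * (1 - g i m)) =
        (1 - α) * pi (i + 1) * (∑ m ∈ Finset.Icc 1 M, η m * f (i + 1) m))
    (hgQ : ∑ m ∈ Finset.Icc 1 M, η m * g Q m = 1)
    (hy : ∀ i, i < Q → ∀ m ∈ Finset.Icc 1 M,
      y i m = pi i * g i m + ξ * pi (i + 1) * f (i + 1) m)
    (hyQ : ∀ m ∈ Finset.Icc 1 M, y Q m = pi Q * g Q m)
    (hyQ1 : ∀ m ∈ Finset.Icc 1 M, y (Q + 1) m = 0) :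
    ∀ i, i ≤ Q → ∀ m ∈ Finset.Icc 1 M,
      0 ≤ y i m ∧
      y i m ≤ ∑ n ∈ Finset.Icc 1 M, η n * y i n +
        ξ * ∑ n ∈ Finset.Icc 1 M, η n * y (i + 1) n := by
  have hξ0 : 0 ≤ ξ := hξ ▸ div_nonneg (by linarith) hα0.le
  have mass : ∀ i ≤ Q, ∑ n ∈ Icc 1 M, η n * y i n = pi i := by
    intro i hi
    rcases hi.lt_or_eq with hlt | rfl
    · rw [← sum_mul_add_eq_of_balance _ η (g i) (f (i + 1)) hα0.ne' hηsum (hbal i hlt)]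
      exact sum_congr rfl fun n hn => by rw [hy i hlt n hn, hξ]
    · rw [← mul_one (pi i), ← hgQ, mul_sum]
      exact sum_congr rfl fun n hn => by rw [hyQ n hn]; ring
  intro i hi m hm
  rcases hi.lt_or_eq with hlt | rfl
  · rw [mass i hi, mass (i + 1) hlt, hy i hlt m hm]
    exact mul_add_mul_mem_Icc (hpi_nonneg i hi) (hpi_nonneg (i + 1) hlt) hξ0 (hg i hi m hm)
      (hf (i + 1) (Nat.le_add_left 1 i) hlt m hm)
  · rw [mass i le_rfl, sum_eq_zero fun n hn => by rw [hyQ1 n hn, mul_zero], hyQ m hm,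
      mul_zero, add_zero]
    have hpQ := hpi_nonneg i le_rfl
    have hgm := hg i le_rfl m hm
    exact ⟨mul_nonneg hpQ hgm.1, mul_le_of_le_one_right hpQ hgm.2⟩

theorem y_satisfies_LP_constraints
    (Q M : ℕ) (hQ : 1 ≤ Q) (hM : 1 ≤ M)
    (α : ℝ) (hα0 : 0 < α) (hα1 : α < 1)
    (ξ : ℝ) (hξ : ξ = (1 - α) / α)
    (η : ℕ → ℝ) (hη : ∀ m ∈ Finset.Icc 1 M, 0 < η m)
    (hηsum : ∑ m ∈ Finset.Icc 1 M, η m = 1)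
    (pi : ℕ → ℝ) (g f y : ℕ → ℕ → ℝ)
    (hpi_nonneg : ∀ i, i ≤ Q → 0 ≤ pi i)
    (hg : ∀ i, i ≤ Q → ∀ m ∈ Finset.Icc 1 M, g i m ∈ Set.Icc (0 : ℝ) 1)
    (hf : ∀ i, 1 ≤ i → i ≤ Q → ∀ m ∈ Finset.Icc 1 M, f i m ∈ Set.Icc (0 : ℝ) 1)
    (hbal : ∀ i, i < Q →
      α * pi i * (∑ m ∈ Finset.Icc 1 M, η m * (1 - g i m)) =
        (1 - α) * pi (i + 1) * (∑ m ∈ Finset.Icc 1 M, η m * f (i + 1) m))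
    (hgQ : ∑ m ∈ Finset.Icc 1 M, η m * g Q m = 1)
    (hy : ∀ i, i < Q → ∀ m ∈ Finset.Icc 1 M,
      y i m = pi i * g i m + ξ * pi (i + 1) * f (i + 1) m)
    (hyQ : ∀ m ∈ Finset.Icc 1 M, y Q m = pi Q * g Q m)
    (hyQ1 : ∀ m ∈ Finset.Icc 1 M, y (Q + 1) m = 0) :
    ∀ i, i ≤ Q → ∀ m ∈ Finset.Icc 1 M,
      0 ≤ y i m ∧
      y i m ≤ ∑ n ∈ Finset.Icc 1 M, η n * y i n +
        ξ * ∑ n ∈ Finset.Icc 1 M, η n * y (i + 1) n :=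
  y_satisfies_LP_constraints_general Q M α hα0 hα1 ξ hξ η hηsum pi g f y hpi_nonneg hg hf hbal hgQ
    hy hyQ hyQ1
end

section
/- Let y = (y_{i,m})_{0≤i≤Q,1≤m≤M} be real numbers, set y_{Q+1,m} := 0, and suppose y satisfies the LP constraints (b) Σ_{i=0}^{Q} Σ_{m=1}^{M} η_m y_{i,m} = 1 and (c) 0 ≤ y_{i,m} ≤ Σ_{n=1}^{M} η_n y_{i,n} + ξ·Σ_{n=1}^{M} η_n y_{i+1,n} for all 0 ≤ i ≤ Q and 1 ≤ m ≤ M. Define π_i := Σ_{m=1}^{M} η_m y_{i,m} for 0 ≤ i ≤ Q and π_{Q+1} := 0. Then π_i ≥ 0, Σ_{i=0}^{Q} π_i = 1, and there exist g_{i,m}, f_{i,m} ∈ [0,1] such that y_{i,m} = π_i g_{i,m} + ξ·π_{i+1} f_{i+1,m} for all 0 ≤ i ≤ Q and 1 ≤ m ≤ M, and moreover the local balance equations α·π_i·Σ_{m=1}^{M} η_m(1−g_{i,m}) = (1−α)·π_{i+1}·Σ_{m=1}^{M} η_m f_{i+1,m} hold for all 0 ≤ i ≤ Q−1. -/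
/-! Put `D_i := π_i + ξ π_{i+1}` and take `g_{i,m} = f_{i+1,m} := y_{i,m} / D_i`.
Constraint (c) says exactly `0 ≤ y_{i,m} ≤ D_i`, so these are probabilities and `π_i g_{i,m} + ξ π_{i+1} f_{i+1,m} =
D_i g_{i,m} = y_{i,m}`. Summing against `η` gives `Σ_m η_m g_{i,m} = π_i / D_i` and
`Σ_m η_m (1 - g_{i,m}) = ξ π_{i+1} / D_i`, and local balance reduces to `α ξ = 1 - α`.
If `D_i = 0`, then (c) forces `y_{i,·} = 0` and `π_i = 0`, and the junk value `y / 0 = 0` is a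
valid choice. -/

open Finset

theorem div_mem_Icc_of_nonneg_of_le {a D : ℝ} (ha : 0 ≤ a) (h : a ≤ D) :
    a / D ∈ Set.Icc (0 : ℝ) 1 :=
  ⟨div_nonneg ha (ha.trans h), div_le_one_of_le₀ h (ha.trans h)⟩

theorem mul_div_cancel_of_nonneg_of_le {a D : ℝ} (ha : 0 ≤ a) (h : a ≤ D) : D * (a / D) = a :=
  mul_div_cancel_of_imp' fun hD => le_antisymm (hD ▸ h) ha

section WeightedSums

variable {ι : Type*} {s : Finset ι} {η y : ι → ℝ}

theorem sum_mul_div (D : ℝ) : ∑ m ∈ s, η m * (y m / D) = (∑ m ∈ s, η m * y m) / D := by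
  rw [sum_div]
  exact sum_congr rfl fun m _ => mul_div_assoc _ _ _ |>.symm

theorem sum_mul_one_sub_div (hη : ∑ m ∈ s, η m = 1) (D : ℝ) :
    ∑ m ∈ s, η m * (1 - y m / D) = 1 - (∑ m ∈ s, η m * y m) / D := by
  simp only [mul_sub, mul_one, sum_sub_distrib, hη, sum_mul_div]

end WeightedSums

theorem local_balance_of_split {α ξ p q : ℝ} (hαξ : α * ξ = 1 - α)
    (hp : p + ξ * q = 0 → p = 0) :
    α * p * (1 - p / (p + ξ * q)) = (1 - α) * q * (p / (p + ξ * q)) := by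
  by_cases hD : p + ξ * q = 0
  · simp [hp hD]
  · field_simp
    linear_combination p * q * hαξ

theorem LP_constraints_give_policy_general
    (Q M : ℕ)
    (α : ℝ) (hα0 : 0 < α)
    (ξ : ℝ) (hξ : ξ = (1 - α) / α)
    (η : ℕ → ℝ) (hη : ∀ m ∈ Finset.Icc 1 M, 0 < η m)
    (hηsum : ∑ m ∈ Finset.Icc 1 M, η m = 1)
    (y : ℕ → ℕ → ℝ)
    (hb : ∑ i ∈ Finset.range (Q + 1), ∑ m ∈ Finset.Icc 1 M, η m * y i m = 1)
    (hc : ∀ i, i ≤ Q → ∀ m ∈ Finset.Icc 1 M,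
      0 ≤ y i m ∧
      y i m ≤ ∑ n ∈ Finset.Icc 1 M, η n * y i n +
        ξ * ∑ n ∈ Finset.Icc 1 M, η n * y (i + 1) n)
    (pi : ℕ → ℝ)
    (hpidef : ∀ i, i ≤ Q + 1 → pi i = ∑ m ∈ Finset.Icc 1 M, η m * y i m) :
    (∀ i, i ≤ Q → 0 ≤ pi i) ∧
    (∑ i ∈ Finset.range (Q + 1), pi i = 1) ∧
    ∃ g f : ℕ → ℕ → ℝ,
      (∀ i, i ≤ Q → ∀ m ∈ Finset.Icc 1 M,
        g i m ∈ Set.Icc (0 : ℝ) 1 ∧ f (i + 1) m ∈ Set.Icc (0 : ℝ) 1 ∧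
        y i m = pi i * g i m + ξ * pi (i + 1) * f (i + 1) m) ∧
      (∀ i, i < Q →
        α * pi i * (∑ m ∈ Finset.Icc 1 M, η m * (1 - g i m)) =
          (1 - α) * pi (i + 1) * (∑ m ∈ Finset.Icc 1 M, η m * f (i + 1) m)) := by
  have hαξ : α * ξ = 1 - α := by rw [hξ]; field_simp
  have hpi : ∀ i ≤ Q, pi i = ∑ m ∈ Icc 1 M, η m * y i m := fun i hi => hpidef i (by omega)
  have hy : ∀ i ≤ Q, ∀ m ∈ Icc 1 M, 0 ≤ y i m ∧ y i m ≤ pi i + ξ * pi (i + 1) := by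
    intro i hi m hm
    rw [hpi i hi, hpidef (i + 1) (by omega)]
    exact hc i hi m hm
  set g : ℕ → ℕ → ℝ := fun i m => y i m / (pi i + ξ * pi (i + 1))
  refine ⟨fun i hi => (hpi i hi).symm ▸ sum_nonneg fun m hm =>
      mul_nonneg (hη m hm).le (hy i hi m hm).1,
    (sum_congr rfl fun i hi => hpi i (by simpa [Nat.lt_succ_iff] using hi)).trans hb,
    g, fun j m => g (j - 1) m, fun i hi m hm => ?_, fun i hi => ?_⟩
  · obtain ⟨h0, hle⟩ := hy i hi m hm
    simp only [Nat.add_sub_cancel, ← add_mul]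
    exact ⟨div_mem_Icc_of_nonneg_of_le h0 hle, div_mem_Icc_of_nonneg_of_le h0 hle,
      (mul_div_cancel_of_nonneg_of_le h0 hle).symm⟩
  · simp only [g, Nat.add_sub_cancel, sum_mul_one_sub_div hηsum, sum_mul_div, ← hpi i hi.le]
    refine local_balance_of_split hαξ fun hD => (hpi i hi.le).trans ?_
    refine sum_eq_zero fun m hm => ?_
    obtain ⟨h0, hle⟩ := hy i hi.le m hm
    rw [le_antisymm (hD ▸ hle) h0, mul_zero]

theorem LP_constraints_give_policy
    (Q M : ℕ) (hQ : 1 ≤ Q) (hM : 1 ≤ M)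
    (α : ℝ) (hα0 : 0 < α) (hα1 : α < 1)
    (ξ : ℝ) (hξ : ξ = (1 - α) / α)
    (η : ℕ → ℝ) (hη : ∀ m ∈ Finset.Icc 1 M, 0 < η m)
    (hηsum : ∑ m ∈ Finset.Icc 1 M, η m = 1)
    (y : ℕ → ℕ → ℝ)
    (hyQ1 : ∀ m ∈ Finset.Icc 1 M, y (Q + 1) m = 0)
    (hb : ∑ i ∈ Finset.range (Q + 1), ∑ m ∈ Finset.Icc 1 M, η m * y i m = 1)
    (hc : ∀ i, i ≤ Q → ∀ m ∈ Finset.Icc 1 M,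
      0 ≤ y i m ∧
      y i m ≤ ∑ n ∈ Finset.Icc 1 M, η n * y i n +
        ξ * ∑ n ∈ Finset.Icc 1 M, η n * y (i + 1) n)
    (pi : ℕ → ℝ)
    (hpidef : ∀ i, i ≤ Q + 1 → pi i = ∑ m ∈ Finset.Icc 1 M, η m * y i m) :
    (∀ i, i ≤ Q → 0 ≤ pi i) ∧
    (∑ i ∈ Finset.range (Q + 1), pi i = 1) ∧
    ∃ g f : ℕ → ℕ → ℝ,
      (∀ i, i ≤ Q → ∀ m ∈ Finset.Icc 1 M,
        g i m ∈ Set.Icc (0 : ℝ) 1 ∧ f (i + 1) m ∈ Set.Icc (0 : ℝ) 1 ∧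
        y i m = pi i * g i m + ξ * pi (i + 1) * f (i + 1) m) ∧
      (∀ i, i < Q →
        α * pi i * (∑ m ∈ Finset.Icc 1 M, η m * (1 - g i m)) =
          (1 - α) * pi (i + 1) * (∑ m ∈ Finset.Icc 1 M, η m * f (i + 1) m)) :=
  LP_constraints_give_policy_general Q M α hα0 ξ hξ η hη hηsum y hb hc pi hpidef
end

section
/- Every LP-feasible family y satisfies D̄(y) ≥ 0. Moreover, if y is LP-feasible and D̄(y) = 0, then necessarily y_{i,m} = 0 for all i ≥ 1 and all m, y_{0,m} = 1 for all 1 ≤ m ≤ M, and P̄(y) = P_th. Consequently, there exists an LP-feasible y with D̄(y) = 0 if and only if p_max ≥ P_th, where P_th := α·Σ_{m=1}^{M} η_m P_m. -/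
/-- LP feasibility (problem (17) of the paper): with the convention
`y (Q+1) m = 0`, the family `y` satisfies the power constraint (a),
the normalization constraint (b), and the inequality constraints (c). -/
def LPfeasible (Q M : ℕ) (α ξ : ℝ) (η Pw : ℕ → ℝ) (pmax : ℝ)
    (y : ℕ → ℕ → ℝ) : Prop :=
  (∀ m ∈ Finset.Icc 1 M, y (Q + 1) m = 0) ∧
  (α * ∑ i ∈ Finset.range (Q + 1), ∑ m ∈ Finset.Icc 1 M, η m * Pw m * y i m ≤ pmax) ∧
  (∑ i ∈ Finset.range (Q + 1), ∑ m ∈ Finset.Icc 1 M, η m * y i m = 1) ∧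
  (∀ i, i ≤ Q → ∀ m ∈ Finset.Icc 1 M,
    0 ≤ y i m ∧
    y i m ≤ ∑ n ∈ Finset.Icc 1 M, η n * y i n +
      ξ * ∑ n ∈ Finset.Icc 1 M, η n * y (i + 1) n)

/-- Average queueing delay `D̄(y) = (1/α) Σ_i Σ_m i·η_m·y_{i,m}`. -/
noncomputable def avgDelay (Q M : ℕ) (α : ℝ) (η : ℕ → ℝ) (y : ℕ → ℕ → ℝ) : ℝ :=
  (1 / α) * ∑ i ∈ Finset.range (Q + 1), ∑ m ∈ Finset.Icc 1 M, (i : ℝ) * η m * y i m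

/-- Average power `P̄(y) = α Σ_i Σ_m η_m·P_m·y_{i,m}`. -/
noncomputable def avgPower (Q M : ℕ) (α : ℝ) (η Pw : ℕ → ℝ) (y : ℕ → ℕ → ℝ) : ℝ :=
  α * ∑ i ∈ Finset.range (Q + 1), ∑ m ∈ Finset.Icc 1 M, η m * Pw m * y i m

/-!
Every term of `D̄(y)` is nonnegative, so zero delay forces `y i m = 0` for all `i ≥ 1`.
Normalization then gives `∑ₘ ηₘ y₀ₘ = 1 = ∑ₘ ηₘ`, while constraint (c) at `i = 0` gives
`y₀ₘ ≤ 1`; with all `ηₘ > 0` this pins `y₀ₘ = 1`, and the power becomes `P_th`.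
Conversely, `y = 𝟙[i = 0]` has zero delay and power `P_th`, so it is feasible once
`P_th ≤ p_max`.
-/

open Finset

theorem sum_range_succ_eq_apply_zero {M : Type*} [AddCommMonoid M] {Q : ℕ} {g : ℕ → M}
    (hg : ∀ i, 1 ≤ i → i ≤ Q → g i = 0) : ∑ i ∈ range (Q + 1), g i = g 0 := by
  rw [sum_range_succ', sum_eq_zero fun i hi => hg (i + 1) (by omega) (by simp at hi; omega),
    zero_add]

theorem eq_one_of_le_one_of_sum_mul_eq_one {ι : Type*} {s : Finset ι} {η x : ι → ℝ}
    (hη : ∀ m ∈ s, 0 < η m) (hηsum : ∑ m ∈ s, η m = 1) (hx : ∀ m ∈ s, x m ≤ 1)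
    (hsum : ∑ m ∈ s, η m * x m = 1) : ∀ m ∈ s, x m = 1 := by
  have hgap : ∑ m ∈ s, η m * (1 - x m) = 0 := by
    simp only [mul_sub, mul_one, sum_sub_distrib, hηsum, hsum, sub_self]
  intro m hm
  have hterm := (sum_eq_zero_iff_of_nonneg fun n hn =>
    mul_nonneg (hη n hn).le (sub_nonneg.mpr (hx n hn))).mp hgap m hm
  have := (mul_eq_zero.mp hterm).resolve_left (hη m hm).ne'
  linarith

section ZeroDelay

variable {Q M : ℕ} {α ξ pmax : ℝ} {η Pw : ℕ → ℝ} {y : ℕ → ℕ → ℝ}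

theorem LPfeasible.nonneg (hy : LPfeasible Q M α ξ η Pw pmax y) {i : ℕ} (hi : i < Q + 1)
    {m : ℕ} (hm : m ∈ Icc 1 M) : 0 ≤ y i m :=
  (hy.2.2.2 i (Nat.lt_succ_iff.mp hi) m hm).1

theorem LPfeasible.delay_term_nonneg (hy : LPfeasible Q M α ξ η Pw pmax y)
    (hη : ∀ m ∈ Icc 1 M, 0 ≤ η m) {i : ℕ} (hi : i ∈ range (Q + 1)) {m : ℕ}
    (hm : m ∈ Icc 1 M) : 0 ≤ (i : ℝ) * η m * y i m := by
  have := hy.nonneg (mem_range.mp hi) hm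
  have := hη m hm
  positivity

theorem LPfeasible.avgDelay_nonneg (hy : LPfeasible Q M α ξ η Pw pmax y) (hα : 0 ≤ α)
    (hη : ∀ m ∈ Icc 1 M, 0 ≤ η m) : 0 ≤ avgDelay Q M α η y :=
  mul_nonneg (by positivity)
    (sum_nonneg fun _ hi => sum_nonneg fun _ hm => hy.delay_term_nonneg hη hi hm)

theorem LPfeasible.eq_zero_of_avgDelay_eq_zero (hy : LPfeasible Q M α ξ η Pw pmax y)
    (hα : 0 < α) (hη : ∀ m ∈ Icc 1 M, 0 < η m) (hD : avgDelay Q M α η y = 0) :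
    ∀ i, 1 ≤ i → i ≤ Q + 1 → ∀ m ∈ Icc 1 M, y i m = 0 := by
  intro i hi1 hiQ m hm
  obtain rfl | hiQ := hiQ.eq_or_lt
  · exact hy.1 m hm
  have hS : ∑ i ∈ range (Q + 1), ∑ m ∈ Icc 1 M, (i : ℝ) * η m * y i m = 0 :=
    (mul_eq_zero.mp hD).resolve_left (by positivity)
  have hi : i ∈ range (Q + 1) := mem_range.mpr hiQ
  have hη' : ∀ m ∈ Icc 1 M, 0 ≤ η m := fun m hm => (hη m hm).le
  rw [sum_eq_zero_iff_of_nonneg fun _ hj => sum_nonneg fun _ hn =>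
    hy.delay_term_nonneg hη' hj hn] at hS
  have hterm := (sum_eq_zero_iff_of_nonneg fun _ hn => hy.delay_term_nonneg hη' hi hn).mp
    (hS i hi) m hm
  exact (mul_eq_zero.mp hterm).resolve_left
    (mul_ne_zero (Nat.cast_ne_zero.mpr (by omega)) (hη m hm).ne')

theorem LPfeasible.sum_eq_sum_zero_of_avgDelay_eq_zero (hy : LPfeasible Q M α ξ η Pw pmax y)
    (hα : 0 < α) (hη : ∀ m ∈ Icc 1 M, 0 < η m) (hD : avgDelay Q M α η y = 0) (f : ℕ → ℝ) :
    ∑ i ∈ range (Q + 1), ∑ m ∈ Icc 1 M, f m * y i m = ∑ m ∈ Icc 1 M, f m * y 0 m :=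
  sum_range_succ_eq_apply_zero fun i hi1 hiQ => sum_eq_zero fun m hm => by
    rw [hy.eq_zero_of_avgDelay_eq_zero hα hη hD i hi1 (by omega) m hm, mul_zero]

theorem LPfeasible.eq_one_of_avgDelay_eq_zero (hy : LPfeasible Q M α ξ η Pw pmax y)
    (hα : 0 < α) (hη : ∀ m ∈ Icc 1 M, 0 < η m) (hηsum : ∑ m ∈ Icc 1 M, η m = 1)
    (hD : avgDelay Q M α η y = 0) : ∀ m ∈ Icc 1 M, y 0 m = 1 := by
  have hnorm : ∑ m ∈ Icc 1 M, η m * y 0 m = 1 := by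
    rw [← hy.2.2.1, hy.sum_eq_sum_zero_of_avgDelay_eq_zero hα hη hD]
  have hnext : ∑ n ∈ Icc 1 M, η n * y 1 n = 0 :=
    sum_eq_zero fun n hn => by
      rw [hy.eq_zero_of_avgDelay_eq_zero hα hη hD 1 le_rfl (by omega) n hn, mul_zero]
  refine eq_one_of_le_one_of_sum_mul_eq_one hη hηsum (fun m hm => ?_) hnorm
  simpa [hnorm, hnext] using (hy.2.2.2 0 (Nat.zero_le Q) m hm).2

theorem LPfeasible.avgPower_eq_of_avgDelay_eq_zero (hy : LPfeasible Q M α ξ η Pw pmax y)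
    (hα : 0 < α) (hη : ∀ m ∈ Icc 1 M, 0 < η m) (hηsum : ∑ m ∈ Icc 1 M, η m = 1)
    (hD : avgDelay Q M α η y = 0) : avgPower Q M α η Pw y = α * ∑ m ∈ Icc 1 M, η m * Pw m := by
  rw [avgPower, hy.sum_eq_sum_zero_of_avgDelay_eq_zero hα hη hD]
  congr 1
  exact sum_congr rfl fun m hm => by
    rw [hy.eq_one_of_avgDelay_eq_zero hα hη hηsum hD m hm, mul_one]

end ZeroDelay

def emptyBufferFamily : ℕ → ℕ → ℝ := fun i _ => if i = 0 then 1 else 0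

section EmptyBuffer

variable {Q M : ℕ} {α : ℝ} {η : ℕ → ℝ}

theorem sum_sum_mul_emptyBufferFamily (f : ℕ → ℝ) :
    ∑ i ∈ range (Q + 1), ∑ m ∈ Icc 1 M, f m * emptyBufferFamily i m = ∑ m ∈ Icc 1 M, f m := by
  rw [sum_range_succ_eq_apply_zero fun i hi _ => by
    simp [emptyBufferFamily, Nat.one_le_iff_ne_zero.mp hi]]
  simp [emptyBufferFamily]

theorem avgDelay_emptyBufferFamily : avgDelay Q M α η emptyBufferFamily = 0 := by
  simp [avgDelay, emptyBufferFamily]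

theorem lpFeasible_emptyBufferFamily {ξ pmax : ℝ} {Pw : ℕ → ℝ}
    (hηsum : ∑ m ∈ Icc 1 M, η m = 1) (hpow : α * ∑ m ∈ Icc 1 M, η m * Pw m ≤ pmax) :
    LPfeasible Q M α ξ η Pw pmax emptyBufferFamily := by
  refine ⟨fun _ _ => rfl, ?_, ?_, fun i _ m _ => ?_⟩
  · rwa [sum_sum_mul_emptyBufferFamily (fun m => η m * Pw m)]
  · rw [sum_sum_mul_emptyBufferFamily η, hηsum]
  · rcases i with _ | i <;> simp [emptyBufferFamily, hηsum]

end EmptyBuffer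

theorem zero_delay_characterization_general
    (Q M : ℕ)
    (α : ℝ) (hα0 : 0 < α)
    (ξ : ℝ)
    (η Pw : ℕ → ℝ) (hη : ∀ m ∈ Finset.Icc 1 M, 0 < η m)
    (hηsum : ∑ m ∈ Finset.Icc 1 M, η m = 1)
    (pmax : ℝ)
    (Pth : ℝ) (hPth : Pth = α * ∑ m ∈ Finset.Icc 1 M, η m * Pw m) :
    (∀ y, LPfeasible Q M α ξ η Pw pmax y → 0 ≤ avgDelay Q M α η y) ∧
    (∀ y, LPfeasible Q M α ξ η Pw pmax y → avgDelay Q M α η y = 0 →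
      (∀ i, 1 ≤ i → i ≤ Q → ∀ m ∈ Finset.Icc 1 M, y i m = 0) ∧
      (∀ m ∈ Finset.Icc 1 M, y 0 m = 1) ∧
      avgPower Q M α η Pw y = Pth) ∧
    ((∃ y, LPfeasible Q M α ξ η Pw pmax y ∧ avgDelay Q M α η y = 0) ↔
      Pth ≤ pmax) := by
  subst hPth
  refine ⟨fun y hy => hy.avgDelay_nonneg hα0.le fun m hm => (hη m hm).le,
    fun y hy hD => ⟨?_, ?_, ?_⟩, ?_, ?_⟩
  · exact fun i hi1 hiQ => hy.eq_zero_of_avgDelay_eq_zero hα0 hη hD i hi1 (by omega)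
  · exact hy.eq_one_of_avgDelay_eq_zero hα0 hη hηsum hD
  · exact hy.avgPower_eq_of_avgDelay_eq_zero hα0 hη hηsum hD
  · rintro ⟨y, hy, hD⟩
    rw [← hy.avgPower_eq_of_avgDelay_eq_zero hα0 hη hηsum hD]
    exact hy.2.1
  · exact fun hpow =>
      ⟨_, lpFeasible_emptyBufferFamily hηsum hpow, avgDelay_emptyBufferFamily⟩

theorem zero_delay_characterization
    (Q M : ℕ) (hQ : 1 ≤ Q) (hM : 1 ≤ M)
    (α : ℝ) (hα0 : 0 < α) (hα1 : α < 1)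
    (ξ : ℝ) (hξ : ξ = (1 - α) / α)
    (η Pw : ℕ → ℝ) (hη : ∀ m ∈ Finset.Icc 1 M, 0 < η m)
    (hηsum : ∑ m ∈ Finset.Icc 1 M, η m = 1)
    (hP1 : 0 < Pw 1) (hPmono : ∀ m, 1 ≤ m → m < M → Pw m ≤ Pw (m + 1))
    (pmax : ℝ) (hpmax : 0 < pmax)
    (Pth : ℝ) (hPth : Pth = α * ∑ m ∈ Finset.Icc 1 M, η m * Pw m) :
    (∀ y, LPfeasible Q M α ξ η Pw pmax y → 0 ≤ avgDelay Q M α η y) ∧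
    (∀ y, LPfeasible Q M α ξ η Pw pmax y → avgDelay Q M α η y = 0 →
      (∀ i, 1 ≤ i → i ≤ Q → ∀ m ∈ Finset.Icc 1 M, y i m = 0) ∧
      (∀ m ∈ Finset.Icc 1 M, y 0 m = 1) ∧
      avgPower Q M α η Pw y = Pth) ∧
    ((∃ y, LPfeasible Q M α ξ η Pw pmax y ∧ avgDelay Q M α η y = 0) ↔
      Pth ≤ pmax) :=
  zero_delay_characterization_general Q M α hα0 ξ η Pw hη hηsum pmax Pth hPth
end

section
/- (Corollary 1.) Assume p_max < P_th, and let y* be an LP-feasible family with D̄(y*) ≤ D̄(y) for every LP-feasible y, which has the threshold structure of Theorem 1 with thresholds 0 = i_1* ≤ i_2* ≤ … ≤ i_M* ≤ Q. Then y*_{i,m} = 0 for every i > i_M* and every m ∈ {1,…,M}; consequently π_i* := Σ_{m=1}^{M} η_m y*_{i,m} = 0 for all i > i_M*, i.e., the optimal queue length never exceeds i_M*. -/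
open Finset

theorem eq_zero_of_forall_eq_weightedSum_add {ι R : Type*} [CommRing R] {s : Finset ι}
    {w y : ι → R} {c : R} (hw : ∑ i ∈ s, w i = 1)
    (hy : ∀ i ∈ s, y i = ∑ j ∈ s, w j * y j + c) : c = 0 := by
  have hsum : ∑ i ∈ s, w i * y i = ∑ i ∈ s, w i * y i + c :=
    calc ∑ i ∈ s, w i * y i
        = ∑ i ∈ s, w i * (∑ j ∈ s, w j * y j + c) := sum_congr rfl fun i hi ↦ by rw [← hy i hi]
      _ = ∑ i ∈ s, w i * y i + c := by rw [← sum_mul, hw, one_mul]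
  exact left_eq_add.mp hsum

theorem queue_never_exceeds_top_threshold_general
    (Q M : ℕ)
    (α : ℝ) (hα0 : 0 < α) (hα1 : α < 1)
    (ξ : ℝ) (hξ : ξ = (1 - α) / α)
    (η Pw : ℕ → ℝ)
    (hηsum : ∑ m ∈ Finset.Icc 1 M, η m = 1)
    (pmax : ℝ)
    (y : ℕ → ℕ → ℝ) (th : ℕ → ℕ)
    (hfeas : LPfeasible Q M α ξ η Pw pmax y)
    (hthmono : ∀ m, 1 ≤ m → m < M → th m ≤ th (m + 1))
    (hs2 : ∀ m ∈ Finset.Icc 1 M, ∀ i, th m ≤ i → i ≤ Q →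
      y i m = ∑ n ∈ Finset.Icc 1 M, η n * y i n +
        ξ * ∑ n ∈ Finset.Icc 1 M, η n * y (i + 1) n) :
    ∀ i, th M < i → i ≤ Q →
      (∀ m ∈ Finset.Icc 1 M, y i m = 0) ∧
      ∑ m ∈ Finset.Icc 1 M, η m * y i m = 0 := by
  set π : ℕ → ℝ := fun i ↦ ∑ n ∈ Icc 1 M, η n * y i n
  have hξ0 : ξ ≠ 0 := by rw [hξ]; exact (div_pos (by linarith) hα0).ne'
  have hth_le : ∀ m ∈ Icc 1 M, th m ≤ th M := by
    have hmono : MonotoneOn th (Set.Icc 1 M) :=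
      monotoneOn_of_le_succ Set.ordConnected_Icc fun m _ hm hm' ↦
        hthmono m hm.1 (Order.succ_le_iff.mp hm'.2)
    intro m hm
    have hm' := mem_Icc.mp hm
    exact hmono hm' ⟨hm'.1.trans hm'.2, le_rfl⟩ hm'.2
  have htight : ∀ i, th M ≤ i → i ≤ Q → ∀ m ∈ Icc 1 M, y i m = π i + ξ * π (i + 1) :=
    fun i hi hiQ m hm ↦ hs2 m hm i ((hth_le m hm).trans hi) hiQ
  have hnext : ∀ i, th M ≤ i → i ≤ Q → π (i + 1) = 0 := fun i hi hiQ ↦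
    (mul_eq_zero.mp (eq_zero_of_forall_eq_weightedSum_add hηsum (htight i hi hiQ))).resolve_left hξ0
  have hboundary : π (Q + 1) = 0 := sum_eq_zero fun n hn ↦ by rw [hfeas.1 n hn, mul_zero]
  intro i hi hiQ
  have hπi : π i = 0 := by
    obtain ⟨k, rfl⟩ : ∃ k, i = k + 1 := ⟨i - 1, by lia⟩
    exact hnext k (by lia) (by lia)
  have hπi1 : π (i + 1) = 0 := by
    rcases hiQ.eq_or_lt with rfl | hiQ'
    · exact hboundary
    · exact hnext i hi.le hiQ'.le
  exact ⟨fun m hm ↦ by rw [htight i hi.le hiQ m hm, hπi, hπi1, mul_zero, add_zero], hπi⟩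

theorem queue_never_exceeds_top_threshold
    (Q M : ℕ) (hQ : 1 ≤ Q) (hM : 1 ≤ M)
    (α : ℝ) (hα0 : 0 < α) (hα1 : α < 1)
    (ξ : ℝ) (hξ : ξ = (1 - α) / α)
    (η Pw : ℕ → ℝ) (hη : ∀ m ∈ Finset.Icc 1 M, 0 < η m)
    (hηsum : ∑ m ∈ Finset.Icc 1 M, η m = 1)
    (hP1 : 0 < Pw 1) (hPmono : ∀ m, 1 ≤ m → m < M → Pw m ≤ Pw (m + 1))
    (pmax : ℝ) (hpmax : 0 < pmax)
    (Pth : ℝ) (hPth : Pth = α * ∑ m ∈ Finset.Icc 1 M, η m * Pw m)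
    (hlt : pmax < Pth)
    (y : ℕ → ℕ → ℝ) (th : ℕ → ℕ) (mt : ℕ)
    (hfeas : LPfeasible Q M α ξ η Pw pmax y)
    (hopt : ∀ z, LPfeasible Q M α ξ η Pw pmax z →
      avgDelay Q M α η y ≤ avgDelay Q M α η z)
    (hth1 : th 1 = 0)
    (hthmono : ∀ m, 1 ≤ m → m < M → th m ≤ th (m + 1))
    (hthQ : th M ≤ Q)
    (hs1 : ∀ m ∈ Finset.Icc 1 M, ∀ i, i + 1 < th m → y i m = 0)
    (hs2 : ∀ m ∈ Finset.Icc 1 M, ∀ i, th m ≤ i → i ≤ Q →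
      y i m = ∑ n ∈ Finset.Icc 1 M, η n * y i n +
        ξ * ∑ n ∈ Finset.Icc 1 M, η n * y (i + 1) n)
    (hs3 : ∀ m ∈ Finset.Icc 2 M, m ≠ mt → 1 ≤ th m → y (th m - 1) m = 0) :
    ∀ i, th M < i → i ≤ Q →
      (∀ m ∈ Finset.Icc 1 M, y i m = 0) ∧
      ∑ m ∈ Finset.Icc 1 M, η m * y i m = 0 :=
  queue_never_exceeds_top_threshold_general Q M α hα0 hα1 ξ hξ η Pw hηsum pmax y th hfeas hthmono
    hs2
end

section
/- (Theorem 3, equation (26).) Let π_0,…,π_Q ≥ 0 with π_{Q+1} := 0, let g_{i,m}, f_{i,m} ∈ [0,1], and suppose y_{i,m} = π_i g_{i,m} + ξ·π_{i+1} f_{i+1,m} for all 0 ≤ i ≤ Q, 1 ≤ m ≤ M. Suppose there are thresholds 0 = i_1* ≤ … ≤ i_M* ≤ Q such that π_i > 0 for 0 ≤ i ≤ i_M*, π_i = 0 for i > i_M*, and y has the structure y_{i,m} = 0 for i < i_m* − 1 and y_{i,m} = π_i + ξ·π_{i+1} for i_m* ≤ i ≤ i_M*. Then for every channel state m: g_{i,m}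 = 0 for all i < i_m* − 1 with i ≤ i_M*, f_{i+1,m} = 0 for all i < i_m* − 1 with i + 1 ≤ i_M*, g_{i,m} = 1 for all i_m* ≤ i ≤ i_M*, and f_{i+1,m} = 1 for all i_m* ≤ i ≤ i_M* − 1. In other words, the optimal scheduling is threshold-based: given channel state m, the source never transmits when the queue length is below i_m* − 1 and always transmits (with power P_m) when the queue length is at least i_m*. -/
/-!
Each `y i m = π_i g + ξ π_{i+1} f` combines two probabilities with nonnegative weights. It
vanishes only if every probability with a positive weight is `0`, and it equals the sum of the
weights only if every such probability is `1`. For `i ≤ th M` the weight `π_i` is positive, and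
so is `ξ π_{i+1}` when moreover `i + 1 ≤ th M`.
-/

section WeightedSum

variable {R : Type*} [Ring R] [LinearOrder R] [IsStrictOrderedRing R] {a b u v : R}

theorem eq_zero_of_mul_add_mul_eq_zero (ha : 0 ≤ a) (hb : 0 ≤ b) (hu : 0 ≤ u) (hv : 0 ≤ v)
    (h : a * u + b * v = 0) : (0 < a → u = 0) ∧ (0 < b → v = 0) := by
  obtain ⟨hau, hbv⟩ := (add_eq_zero_iff_of_nonneg (mul_nonneg ha hu) (mul_nonneg hb hv)).1 h
  exact ⟨fun ha' => (mul_eq_zero.1 hau).resolve_left ha'.ne',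
    fun hb' => (mul_eq_zero.1 hbv).resolve_left hb'.ne'⟩

theorem eq_one_of_mul_add_mul_eq_add (ha : 0 ≤ a) (hb : 0 ≤ b) (hu : u ≤ 1) (hv : v ≤ 1)
    (h : a * u + b * v = a + b) : (0 < a → u = 1) ∧ (0 < b → v = 1) := by
  have h' : a * (1 - u) + b * (1 - v) = 0 := by
    rw [mul_sub, mul_sub, mul_one, mul_one, sub_add_sub_comm, h, sub_self]
  obtain ⟨hu', hv'⟩ := eq_zero_of_mul_add_mul_eq_zero ha hb (sub_nonneg.2 hu) (sub_nonneg.2 hv) h'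
  exact ⟨fun ha' => (sub_eq_zero.1 (hu' ha')).symm, fun hb' => (sub_eq_zero.1 (hv' hb')).symm⟩

end WeightedSum

theorem optimal_transmission_probabilities_threshold_general
    (Q M : ℕ)
    (α : ℝ) (hα0 : 0 < α) (hα1 : α < 1)
    (ξ : ℝ) (hξ : ξ = (1 - α) / α)
    (pi : ℕ → ℝ) (g f y : ℕ → ℕ → ℝ)
    (hg : ∀ i, i ≤ Q → ∀ m ∈ Finset.Icc 1 M, g i m ∈ Set.Icc (0 : ℝ) 1)
    (hf : ∀ i, 1 ≤ i → i ≤ Q + 1 → ∀ m ∈ Finset.Icc 1 M,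
      f i m ∈ Set.Icc (0 : ℝ) 1)
    (hy : ∀ i, i ≤ Q → ∀ m ∈ Finset.Icc 1 M,
      y i m = pi i * g i m + ξ * pi (i + 1) * f (i + 1) m)
    (th : ℕ → ℕ)
    (hthQ : th M ≤ Q)
    (hpi_pos : ∀ i, i ≤ th M → 0 < pi i)
    (hpi_zero : ∀ i, th M < i → i ≤ Q + 1 → pi i = 0)
    (hy0 : ∀ m ∈ Finset.Icc 1 M, ∀ i, i + 1 < th m → i ≤ Q → y i m = 0)
    (hyfull : ∀ m ∈ Finset.Icc 1 M, ∀ i, th m ≤ i → i ≤ th M →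
      y i m = pi i + ξ * pi (i + 1)) :
    ∀ m ∈ Finset.Icc 1 M,
      (∀ i, i + 1 < th m → i ≤ th M → g i m = 0) ∧
      (∀ i, i + 1 < th m → i + 1 ≤ th M → f (i + 1) m = 0) ∧
      (∀ i, th m ≤ i → i ≤ th M → g i m = 1) ∧
      (∀ i, th m ≤ i → i + 1 ≤ th M → f (i + 1) m = 1) := by
  have hξ_pos : 0 < ξ := hξ ▸ div_pos (sub_pos.2 hα1) hα0
  have hpi_succ_nonneg : ∀ i, i ≤ th M → 0 ≤ pi (i + 1) := fun i hi =>
    (lt_or_ge (th M) (i + 1)).elim (fun h => (hpi_zero _ h (by omega)).ge)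
      (fun h => (hpi_pos _ h).le)
  intro m hm
  have level : ∀ i, i ≤ th M →
      (y i m = 0 → g i m = 0 ∧ (i + 1 ≤ th M → f (i + 1) m = 0)) ∧
      (y i m = pi i + ξ * pi (i + 1) → g i m = 1 ∧ (i + 1 ≤ th M → f (i + 1) m = 1)) := by
    intro i hi
    obtain ⟨hg0, hg1⟩ := hg i (hi.trans hthQ) m hm
    obtain ⟨hf0, hf1⟩ := hf (i + 1) (by omega) (by omega) m hm
    have ha := hpi_pos i hi
    have hb : 0 ≤ ξ * pi (i + 1) := mul_nonneg hξ_pos.le (hpi_succ_nonneg i hi)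
    have hb_pos (h : i + 1 ≤ th M) : 0 < ξ * pi (i + 1) := mul_pos hξ_pos (hpi_pos _ h)
    rw [hy i (hi.trans hthQ) m hm]
    refine ⟨fun h => ?_, fun h => ?_⟩
    · obtain ⟨hg', hf'⟩ := eq_zero_of_mul_add_mul_eq_zero ha.le hb hg0 hf0 h
      exact ⟨hg' ha, hf' ∘ hb_pos⟩
    · obtain ⟨hg', hf'⟩ := eq_one_of_mul_add_mul_eq_add ha.le hb hg1 hf1 h
      exact ⟨hg' ha, hf' ∘ hb_pos⟩
  refine ⟨fun i hi hiM => ?_, fun i hi hiM => ?_, fun i hi hiM => ?_, fun i hi hiM => ?_⟩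
  · exact ((level i hiM).1 (hy0 m hm i hi (hiM.trans hthQ))).1
  · exact ((level i (by omega)).1 (hy0 m hm i hi (by omega))).2 hiM
  · exact ((level i hiM).2 (hyfull m hm i hi hiM)).1
  · exact ((level i (by omega)).2 (hyfull m hm i hi (by omega))).2 hiM

theorem optimal_transmission_probabilities_threshold
    (Q M : ℕ) (hQ : 1 ≤ Q) (hM : 1 ≤ M)
    (α : ℝ) (hα0 : 0 < α) (hα1 : α < 1)
    (ξ : ℝ) (hξ : ξ = (1 - α) / α)
    (pi : ℕ → ℝ) (g f y : ℕ → ℕ → ℝ)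
    (hpi_nonneg : ∀ i, i ≤ Q → 0 ≤ pi i)
    (hpiQ1 : pi (Q + 1) = 0)
    (hg : ∀ i, i ≤ Q → ∀ m ∈ Finset.Icc 1 M, g i m ∈ Set.Icc (0 : ℝ) 1)
    (hf : ∀ i, 1 ≤ i → i ≤ Q + 1 → ∀ m ∈ Finset.Icc 1 M,
      f i m ∈ Set.Icc (0 : ℝ) 1)
    (hy : ∀ i, i ≤ Q → ∀ m ∈ Finset.Icc 1 M,
      y i m = pi i * g i m + ξ * pi (i + 1) * f (i + 1) m)
    (th : ℕ → ℕ)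
    (hth1 : th 1 = 0)
    (hthmono : ∀ m, 1 ≤ m → m < M → th m ≤ th (m + 1))
    (hthQ : th M ≤ Q)
    (hpi_pos : ∀ i, i ≤ th M → 0 < pi i)
    (hpi_zero : ∀ i, th M < i → i ≤ Q + 1 → pi i = 0)
    (hy0 : ∀ m ∈ Finset.Icc 1 M, ∀ i, i + 1 < th m → i ≤ Q → y i m = 0)
    (hyfull : ∀ m ∈ Finset.Icc 1 M, ∀ i, th m ≤ i → i ≤ th M →
      y i m = pi i + ξ * pi (i + 1)) :
    ∀ m ∈ Finset.Icc 1 M,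
      (∀ i, i + 1 < th m → i ≤ th M → g i m = 0) ∧
      (∀ i, i + 1 < th m → i + 1 ≤ th M → f (i + 1) m = 0) ∧
      (∀ i, th m ≤ i → i ≤ th M → g i m = 1) ∧
      (∀ i, th m ≤ i → i + 1 ≤ th M → f (i + 1) m = 1) :=
  optimal_transmission_probabilities_threshold_general Q M α hα0 hα1 ξ hξ pi g f y hg hf hy th hthQ
    hpi_pos hpi_zero hy0 hyfull
end

section
/- (Corollary 2: closed-form threshold for the two-state channel, equation (31).) Let r > 0 and π_0 ∈ (0,1], and suppose there exists a nonnegative integer k with π_0·Σ_{i=0}^{k−1} r^i > 1. If r ≠ 1, then 1 − (1 − r)/π_0 > 0 and the largest nonnegative integer k satisfying π_0·Σ_{i=0}^{k−1} r^i ≤ 1 equals ⌊log_r(1 − (1/π_0)·(1 − r))⌋; if r = 1, the largest such k equals ⌊1/π_0⌋. In the two-state channel setting M = 2 with r = (1 − η_1)/(η_1·ξ) and π_0 = π_0* the optimal empty-queue probability, this largest k is the optimal queue-length threshold i_2* for channel state 2. -/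
/-! For `r ≠ 1` the condition `π₀ (rᵏ - 1) / (r - 1) ≤ 1` is equivalent to
`k ≤ log_r (1 - (1 - r) / π₀)`: clearing the denominator reverses the inequality exactly when
`r < 1`, and so does `log_r`. For `r = 1` it reads `π₀ k ≤ 1`. Either way the admissible `k` are
the naturals below some real number, whose largest element is its floor. -/

open Finset Real

lemma isGreatest_setOf_natCast_le {α : Type*} [Semiring α] [LinearOrder α]
    [IsStrictOrderedRing α] [FloorSemiring α] {a : α} (ha : 0 ≤ a) :
    IsGreatest {k : ℕ | (k : α) ≤ a} ⌊a⌋₊ :=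
  ⟨Nat.floor_le ha, fun _ hk => Nat.le_floor hk⟩

lemma exists_isGreatest_eq_floor {α : Type*} [Ring α] [LinearOrder α] [IsStrictOrderedRing α]
    [FloorRing α] {P : ℕ → Prop} {a : α} (hP : ∀ k, P k ↔ (k : α) ≤ a) (h0 : P 0) :
    ∃ k : ℕ, IsGreatest {k | P k} k ∧ (k : ℤ) = ⌊a⌋ := by
  have ha : 0 ≤ a := by simpa using (hP 0).1 h0
  refine ⟨⌊a⌋₊, ?_, Int.natCast_floor_eq_floor ha⟩
  simpa only [hP] using isGreatest_setOf_natCast_le ha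

/-- For `r < 1` the partial sums are bounded by the full series `1 / (1 - r)`. -/
lemma one_sub_div_pos_of_lt_mul_geom_sum {r p : ℝ} {k : ℕ} (hr : 0 ≤ r) (hp : 0 < p)
    (hk : 1 < p * ∑ i ∈ range k, r ^ i) :
    0 < 1 - (1 - r) / p := by
  rcases lt_or_ge r 1 with hr1 | hr1
  · have hsum : ∑ i ∈ range k, r ^ i ≤ 1 / (1 - r) := by
      simpa [← Nat.Ico_zero_eq_range] using geom_sum_Ico_le_of_lt_one (m := 0) (n := k) hr hr1
    have hlt := hk.trans_le (mul_le_mul_of_nonneg_left hsum hp.le)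
    rw [mul_one_div, one_lt_div (by linarith)] at hlt
    rwa [sub_pos, div_lt_one hp]
  · have : (1 - r) / p ≤ 0 := div_nonpos_of_nonpos_of_nonneg (by linarith) hp.le
    linarith

lemma mul_geom_sum_le_one_iff_le_logb {r p : ℝ} (hr : 0 < r) (hr1 : r ≠ 1) (hp : 0 < p)
    (hc : 0 < 1 - (1 - r) / p) (k : ℕ) :
    p * ∑ i ∈ range k, r ^ i ≤ 1 ↔ (k : ℝ) ≤ logb r (1 - (1 - r) / p) := by
  rcases hr1.lt_or_gt with hlt | hgt
  · rw [le_logb_iff_rpow_le_of_base_lt_one hr hlt hc, rpow_natCast, sub_le_comm, le_div_iff₀ hp,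
      geom_sum_eq hr1, mul_div_assoc', div_le_one_of_neg (by linarith)]
    constructor <;> intro h <;> linarith
  · rw [le_logb_iff_rpow_le hgt hc, rpow_natCast, le_sub_comm, div_le_iff₀ hp, geom_sum_eq hr1,
      mul_div_assoc', div_le_one (by linarith)]
    constructor <;> intro h <;> linarith

lemma mul_sum_one_pow_le_one_iff {p : ℝ} (hp : 0 < p) (k : ℕ) :
    p * ∑ i ∈ range k, (1 : ℝ) ^ i ≤ 1 ↔ (k : ℝ) ≤ 1 / p := by
  simp only [one_pow, sum_const, card_range, nsmul_one]
  rw [le_div_iff₀ hp, mul_comm]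

theorem two_state_threshold_closed_form_general
    (r pi0 : ℝ) (hr : 0 < r) (hpi0 : 0 < pi0)
    (hex : ∃ k : ℕ, 1 < pi0 * ∑ i ∈ Finset.range k, r ^ i) :
    (r ≠ 1 →
      0 < 1 - (1 - r) / pi0 ∧
      ∃ k : ℕ,
        IsGreatest {k : ℕ | pi0 * ∑ i ∈ Finset.range k, r ^ i ≤ 1} k ∧
        (k : ℤ) = ⌊Real.logb r (1 - (1 / pi0) * (1 - r))⌋) ∧
    (r = 1 →
      ∃ k : ℕ,
        IsGreatest {k : ℕ | pi0 * ∑ i ∈ Finset.range k, r ^ i ≤ 1} k ∧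
        (k : ℤ) = ⌊1 / pi0⌋) := by
  have h0 : pi0 * ∑ i ∈ range 0, r ^ i ≤ 1 := by simp
  refine ⟨fun hr1 => ?_, fun hr1 => ?_⟩
  · obtain ⟨k, hk⟩ := hex
    have hc := one_sub_div_pos_of_lt_mul_geom_sum hr.le hpi0 hk
    rw [one_div_mul_eq_div]
    exact ⟨hc, exists_isGreatest_eq_floor (mul_geom_sum_le_one_iff_le_logb hr hr1 hpi0 hc) h0⟩
  · subst hr1
    exact exists_isGreatest_eq_floor (mul_sum_one_pow_le_one_iff hpi0) h0

theorem two_state_threshold_closed_form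
    (r pi0 : ℝ) (hr : 0 < r) (hpi0 : 0 < pi0) (hpi0le : pi0 ≤ 1)
    (hex : ∃ k : ℕ, 1 < pi0 * ∑ i ∈ Finset.range k, r ^ i) :
    (r ≠ 1 →
      0 < 1 - (1 - r) / pi0 ∧
      ∃ k : ℕ,
        IsGreatest {k : ℕ | pi0 * ∑ i ∈ Finset.range k, r ^ i ≤ 1} k ∧
        (k : ℤ) = ⌊Real.logb r (1 - (1 / pi0) * (1 - r))⌋) ∧
    (r = 1 →
      ∃ k : ℕ,
        IsGreatest {k : ℕ | pi0 * ∑ i ∈ Finset.range k, r ^ i ≤ 1} k ∧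
        (k : ℤ) = ⌊1 / pi0⌋) :=
  two_state_threshold_closed_form_general r pi0 hr hpi0 hex
end
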